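/- Fix an integer q ≥ 1. Let K_n, P_n be sequences of positive integers with q ≤ K_n ≤ P_n, K_n = ω(1), and K_n = o(√P_n). Define p_q(n) = Σ_{u=q}^{K_n} C(K_n,u)·C(P_n−K_n,K_n−u)/C(P_n,K_n). Then p_q(n) ~ (1/q!)·(K_n²/P_n)^q, i.e., the ratio of the two sides tends to 1 as n → ∞. -/

import Mathlib

/-!
The summands `t_u = pShareExactly K P u` of `p_q` decay geometrically once `4K² ≤ P`:
`t_{u+1} ≤ (2K²/P) t_u`, so `t_q ≤ p_q ≤ t_q / (1 - 2K²/P)` and `p_q ~ t_q`.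
In falling factorials `t_q = ((K)_q)² / q! · (P-K)_{K-q} / (P)_K`, where `(K)_q ~ K^q`,
and `P^q (P-K)_{K-q} / (P)_K` lies between `1 - 2K²/P` and `(1 - K/P)^{-q}`,
both of which tend to `1` because `K²/P → 0`.
-/

open Filter

noncomputable section

/-- `p_q`: the key-setup probability that two independent uniformly random
`K`-subsets of a `P`-element key pool share at least `q` keys. -/
def pSetup (q K P : ℕ) : ℝ :=
  ∑ u ∈ Finset.Icc q K,
    ((K.choose u : ℝ) * ((P - K).choose (K - u) : ℝ)) / (P.choose K : ℝ)

open Asymptotics Finset Nat Topology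

def pShareExactly (K P u : ℕ) : ℝ :=
  (K.choose u : ℝ) * ((P - K).choose (K - u) : ℝ) / (P.choose K : ℝ)

lemma pSetup_eq_sum (q K P : ℕ) : pSetup q K P = ∑ u ∈ Icc q K, pShareExactly K P u := rfl

lemma pShareExactly_nonneg (K P u : ℕ) : 0 ≤ pShareExactly K P u := by
  unfold pShareExactly; positivity

lemma pShareExactly_eq_descFactorial {q K : ℕ} (P : ℕ) (hqK : q ≤ K) :
    pShareExactly K P q = (K.descFactorial q : ℝ) ^ 2 / q ! *
      ((P - K).descFactorial (K - q) / P.descFactorial K) := by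
  have hK : (K.choose q : ℝ) * q ! * (K - q)! = K ! := by
    exact_mod_cast Nat.choose_mul_factorial_mul_factorial hqK
  have hchoose : (K.choose q : ℝ) ≠ 0 := by exact_mod_cast (Nat.choose_pos hqK).ne'
  simp only [pShareExactly, descFactorial_eq_factorial_mul_choose, cast_mul, ← hK]
  field_simp

lemma pShareExactly_pos {q K P : ℕ} (hqK : q ≤ K) (hKP : 2 * K ≤ P) :
    0 < pShareExactly K P q := by
  unfold pShareExactly
  have := Nat.choose_pos hqK
  have := Nat.choose_pos (show K - q ≤ P - K by omega)
  have := Nat.choose_pos (show K ≤ P by omega)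
  positivity

lemma pShareExactly_le_pSetup {q K : ℕ} (P : ℕ) (hqK : q ≤ K) :
    pShareExactly K P q ≤ pSetup q K P := by
  rw [pSetup_eq_sum]
  exact single_le_sum (fun u _ => pShareExactly_nonneg K P u) (mem_Icc.mpr ⟨le_rfl, hqK⟩)

lemma pShareExactly_succ_le {K P : ℕ} (hKP : 4 * K ≤ P) (u : ℕ) :
    pShareExactly K P (u + 1) ≤ 2 * K ^ 2 / P * pShareExactly K P u := by
  rcases le_or_gt K u with hu | hu
  · rw [pShareExactly, choose_eq_zero_of_lt (by omega : K < u + 1), cast_zero, zero_mul, zero_div]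
    exact mul_nonneg (by positivity) (pShareExactly_nonneg K P u)
  -- `t_{u+1} / t_u = (K - u)² / ((u + 1) D)` with `D ≥ P / 2`
  set D := P - K - (K - u - 1)
  have hsucc : K.choose (u + 1) * (P - K).choose (K - (u + 1)) * ((u + 1) * D)
      = K.choose u * (P - K).choose (K - u) * (K - u) ^ 2 := by
    have h1 := choose_succ_right_eq K u
    have h2 := choose_succ_right_eq (P - K) (K - u - 1)
    rw [show K - u - 1 + 1 = K - u by omega] at h2
    rw [show K - (u + 1) = K - u - 1 by omega]
    calc _ = (K.choose (u + 1) * (u + 1)) * ((P - K).choose (K - u - 1) * D) := by ring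
      _ = _ := by rw [h1, ← h2]; ring
  have hnat : K.choose (u + 1) * (P - K).choose (K - (u + 1)) * P
      ≤ 2 * K ^ 2 * (K.choose u * (P - K).choose (K - u)) :=
    calc _ ≤ K.choose (u + 1) * (P - K).choose (K - (u + 1)) * (2 * ((u + 1) * D)) := by
          gcongr; nlinarith [show P ≤ 2 * D by omega]
      _ = 2 * (K.choose u * (P - K).choose (K - u) * (K - u) ^ 2) := by rw [← hsucc]; ring
      _ ≤ 2 * (K.choose u * (P - K).choose (K - u) * K ^ 2) := by gcongr; omega
      _ = _ := by ring
  have hreal : (K.choose (u + 1) : ℝ) * (P - K).choose (K - (u + 1)) * P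
      ≤ 2 * K ^ 2 * (K.choose u * (P - K).choose (K - u)) := by exact_mod_cast hnat
  have hP : (0 : ℝ) < P := by exact_mod_cast (show 0 < P by omega)
  unfold pShareExactly
  rw [← mul_div_assoc]
  refine div_le_div_of_nonneg_right ?_ (by positivity)
  rw [div_mul_eq_mul_div, le_div_iff₀ hP]
  linarith

lemma sum_Icc_le_div_one_sub_of_le_mul {f : ℕ → ℝ} {r : ℝ} (hr0 : 0 ≤ r) (hr1 : r < 1)
    (hf : ∀ u, f (u + 1) ≤ r * f u) {a : ℕ} (ha : 0 ≤ f a) (b : ℕ) :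
    ∑ u ∈ Icc a b, f u ≤ f a / (1 - r) := by
  have hgeom : ∀ i, f (a + i) ≤ f a * r ^ i := by
    intro i
    induction i with
    | zero => simp
    | succ i ih =>
      calc f (a + i + 1) ≤ r * f (a + i) := hf _
        _ ≤ r * (f a * r ^ i) := by gcongr
        _ = f a * r ^ (i + 1) := by ring
  calc ∑ u ∈ Icc a b, f u = ∑ i ∈ range (b + 1 - a), f (a + i) := by
        rw [← Ico_add_one_right_eq_Icc, sum_Ico_eq_sum_range]
    _ ≤ ∑ i ∈ range (b + 1 - a), f a * r ^ i := sum_le_sum fun i _ => hgeom i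
    _ = f a * ∑ i ∈ Ico 0 (b + 1 - a), r ^ i := by rw [← mul_sum, range_eq_Ico]
    _ ≤ f a * (r ^ 0 / (1 - r)) := by gcongr; exact geom_sum_Ico_le_of_lt_one hr0 hr1
    _ = f a / (1 - r) := by ring

lemma pSetup_le {q K P : ℕ} (hKP : 4 * K ^ 2 ≤ P) :
    pSetup q K P ≤ pShareExactly K P q / (1 - 2 * K ^ 2 / P) := by
  have hKP' : 4 * (K : ℝ) ^ 2 ≤ P := by exact_mod_cast hKP
  have hr : 2 * (K : ℝ) ^ 2 / P ≤ 1 / 2 :=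
    div_le_of_le_mul₀ (by positivity) (by norm_num) (by linarith)
  rw [pSetup_eq_sum]
  exact sum_Icc_le_div_one_sub_of_le_mul (by positivity) (by linarith)
    (pShareExactly_succ_le (by nlinarith [Nat.le_self_pow two_ne_zero K]))
    (pShareExactly_nonneg K P q) K

lemma one_sub_le_pow_mul_descFactorial_div {q K P : ℕ} (hqK : q ≤ K) (hKP : 2 * K ≤ P)
    (hP : 0 < P) :
    1 - 2 * K ^ 2 / P ≤ (P : ℝ) ^ q * ((P - K).descFactorial (K - q) / P.descFactorial K) := by
  have hPr : (0 : ℝ) < P := by exact_mod_cast hP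
  have hnum : ((P - 2 * K : ℕ) : ℝ) ^ (K - q) ≤ (P - K).descFactorial (K - q) := by
    exact_mod_cast
      (Nat.pow_le_pow_left (by omega) _).trans (pow_sub_le_descFactorial (P - K) (K - q))
  have hden : (P.descFactorial K : ℝ) ≤ (P : ℝ) ^ K := by
    exact_mod_cast descFactorial_le_pow P K
  have hbase : 1 + -(2 * K / P : ℝ) = ((P - 2 * K : ℕ) : ℝ) / P := by
    rw [cast_sub hKP]; field_simp; push_cast; ring
  have hbern : -2 ≤ -(2 * K / P : ℝ) := by
    rw [neg_le_neg_iff, div_le_iff₀ hPr]; exact_mod_cast (by omega : 2 * K ≤ 2 * P)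
  have hKq : ((K - q : ℕ) : ℝ) ≤ K := by exact_mod_cast Nat.sub_le K q
  calc 1 - 2 * K ^ 2 / P ≤ 1 + (K - q : ℕ) * -(2 * K / P : ℝ) := by
        rw [mul_neg, ← sub_eq_add_neg, show 2 * (K : ℝ) ^ 2 / P = K * (2 * K / P) by ring]
        gcongr
    _ ≤ (1 + -(2 * K / P : ℝ)) ^ (K - q) := one_add_mul_le_pow hbern _
    _ = (P : ℝ) ^ q * (((P - 2 * K : ℕ) : ℝ) ^ (K - q) / P ^ K) := by
        rw [hbase, div_pow, ← pow_mul_pow_sub _ hqK]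
        field_simp
    _ ≤ _ := by
        have := descFactorial_pos.mpr (by omega : K ≤ P)
        gcongr

lemma pow_mul_descFactorial_div_le {q K P : ℕ} (hqK : q ≤ K) (hKP : K < P) :
    (P : ℝ) ^ q * ((P - K).descFactorial (K - q) / P.descFactorial K) ≤
      (1 - K / P : ℝ)⁻¹ ^ q := by
  have hPK : (0 : ℝ) < (P - K : ℕ) := by exact_mod_cast Nat.sub_pos_of_lt hKP
  have hnum : ((P - K).descFactorial (K - q) : ℝ) ≤ ((P - K : ℕ) : ℝ) ^ (K - q) := by
    exact_mod_cast descFactorial_le_pow (P - K) (K - q)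
  have hden : ((P - K : ℕ) : ℝ) ^ K ≤ P.descFactorial K := by
    exact_mod_cast (Nat.pow_le_pow_left (by omega) _).trans (pow_sub_le_descFactorial P K)
  have hinv : (1 - K / P : ℝ)⁻¹ = P / (P - K : ℕ) := by
    rw [one_sub_div (by exact_mod_cast (by omega : P ≠ 0)), inv_div, cast_sub hKP.le]
  calc _ ≤ (P : ℝ) ^ q * (((P - K : ℕ) : ℝ) ^ (K - q) / ((P - K : ℕ) : ℝ) ^ K) := by
        gcongr
    _ = _ := by rw [hinv, div_pow, ← pow_mul_pow_sub _ hqK]; field_simp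

section Limits

variable {ι : Type*} {l : Filter ι} {K P : ι → ℕ}

lemma eventually_four_mul_sq_le (hP : ∀ᶠ i in l, 0 < P i)
    (hρ : Tendsto (fun i => (K i : ℝ) ^ 2 / P i) l (𝓝 0)) :
    ∀ᶠ i in l, 4 * K i ^ 2 ≤ P i := by
  filter_upwards [hP, hρ.eventually (gt_mem_nhds (by norm_num : (0 : ℝ) < 1 / 4))] with i hPi hi
  have hPr : (0 : ℝ) < P i := by exact_mod_cast hPi
  rw [div_lt_iff₀ hPr] at hi
  exact_mod_cast (by linarith : 4 * (K i : ℝ) ^ 2 ≤ P i)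

lemma tendsto_pow_mul_descFactorial_div {q : ℕ} (hqK : ∀ᶠ i in l, q ≤ K i)
    (hP : ∀ᶠ i in l, 0 < P i) (hρ : Tendsto (fun i => (K i : ℝ) ^ 2 / P i) l (𝓝 0)) :
    Tendsto (fun i => (P i : ℝ) ^ q *
      ((P i - K i).descFactorial (K i - q) / (P i).descFactorial (K i))) l (𝓝 1) := by
  have hKP : Tendsto (fun i => (K i : ℝ) / P i) l (𝓝 0) :=
    squeeze_zero (fun i => by positivity)
      (fun i => by gcongr; exact_mod_cast Nat.le_self_pow two_ne_zero (K i)) hρ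
  have hlower : Tendsto (fun i => 1 - 2 * (K i : ℝ) ^ 2 / P i) l (𝓝 1) := by
    simpa [mul_div_assoc] using tendsto_const_nhds.sub (hρ.const_mul 2)
  have hupper : Tendsto (fun i => (1 - K i / P i : ℝ)⁻¹ ^ q) l (𝓝 1) := by
    simpa using (((tendsto_const_nhds (x := (1 : ℝ))).sub hKP).inv₀ (by norm_num)).pow q
  refine tendsto_of_tendsto_of_tendsto_of_le_of_le' hlower hupper ?_ ?_
  all_goals filter_upwards [hqK, hP, eventually_four_mul_sq_le hP hρ] with i hqKi hPi hKPi
  · exact one_sub_le_pow_mul_descFactorial_div hqKi (by nlinarith) hPi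
  · exact pow_mul_descFactorial_div_le hqKi (by nlinarith)

lemma isEquivalent_pShareExactly {q : ℕ} (hK : Tendsto K l atTop) (hP : ∀ᶠ i in l, 0 < P i)
    (hρ : Tendsto (fun i => (K i : ℝ) ^ 2 / P i) l (𝓝 0)) :
    (fun i => pShareExactly (K i) (P i) q) ~[l]
      fun i => 1 / (q ! : ℝ) * ((K i : ℝ) ^ 2 / P i) ^ q := by
  have hqK := hK.eventually_ge_atTop q
  have hA : (fun i => ((K i).descFactorial q : ℝ)) ~[l] fun i => (K i : ℝ) ^ q :=
    (isEquivalent_descFactorial q).comp_tendsto hK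
  have hB : (fun i => ((P i - K i).descFactorial (K i - q) : ℝ) / (P i).descFactorial (K i))
      ~[l] fun i => ((P i : ℝ) ^ q)⁻¹ := by
    refine isEquivalent_of_tendsto_one
      ((tendsto_pow_mul_descFactorial_div hqK hP hρ).congr fun i => ?_)
    simp [mul_comm]
  refine ((((hA.pow 2).div (IsEquivalent.refl (u := fun _ => (q ! : ℝ)))).mul hB).congr_left
    ?_).congr_right (Eventually.of_forall fun i => ?_)
  · filter_upwards [hqK] with i hi
    simp [pShareExactly_eq_descFactorial _ hi]
  · simp only [Pi.mul_apply, Pi.div_apply, Pi.pow_apply]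
    ring

lemma isEquivalent_pSetup_pShareExactly {q : ℕ} (hqK : ∀ᶠ i in l, q ≤ K i)
    (hP : ∀ᶠ i in l, 0 < P i) (hρ : Tendsto (fun i => (K i : ℝ) ^ 2 / P i) l (𝓝 0)) :
    (fun i => pSetup q (K i) (P i)) ~[l] fun i => pShareExactly (K i) (P i) q := by
  have hupper : Tendsto (fun i => (1 - 2 * (K i : ℝ) ^ 2 / P i)⁻¹) l (𝓝 1) := by
    simpa [mul_div_assoc] using
      ((tendsto_const_nhds (x := (1 : ℝ))).sub (hρ.const_mul 2)).inv₀ (by norm_num)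
  refine isEquivalent_of_tendsto_one
    (tendsto_of_tendsto_of_tendsto_of_le_of_le' tendsto_const_nhds hupper ?_ ?_)
  all_goals filter_upwards [hqK, eventually_four_mul_sq_le hP hρ] with i hqKi hKPi
  all_goals have hpos := pShareExactly_pos (P := P i) hqKi (by nlinarith)
  · exact (one_le_div hpos).mpr (pShareExactly_le_pSetup _ hqKi)
  · rw [Pi.div_apply, div_le_iff₀ hpos, ← div_eq_inv_mul]
    exact pSetup_le hKPi

end Limits

theorem pSetup_asymptotics_general
    (q : ℕ)
    (K P : ℕ → ℕ)
    (hPpos : ∀ n, 0 < P n)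
    (hKomega : Tendsto (fun n => (K n : ℝ)) atTop atTop)
    (hKsqrt : Tendsto (fun n => (K n : ℝ) / Real.sqrt ((P n : ℝ))) atTop (nhds 0)) :
    Tendsto
      (fun n => pSetup q (K n) (P n) /
        ((1 / (q.factorial : ℝ)) * ((K n : ℝ) ^ 2 / (P n : ℝ)) ^ q))
      atTop (nhds 1) := by
  have hK : Tendsto K atTop atTop := tendsto_natCast_atTop_iff.mp hKomega
  have hρ : Tendsto (fun n => (K n : ℝ) ^ 2 / P n) atTop (𝓝 0) := by
    simpa [div_pow] using hKsqrt.pow 2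
  have hP : ∀ᶠ n in atTop, 0 < P n := Eventually.of_forall hPpos
  refine (isEquivalent_iff_tendsto_one ?_).mp
    ((isEquivalent_pSetup_pShareExactly (hK.eventually_ge_atTop q) hP hρ).trans
      (isEquivalent_pShareExactly hK hP hρ))
  filter_upwards [hK.eventually_ge_atTop 1] with n hn
  have : 0 < P n := hPpos n
  positivity

/-- Asymptotics of the key-setup probability:
`p_q(n) ~ (1/q!)·(K_n²/P_n)^q` when `K_n = ω(1)` and `K_n = o(√P_n)`. -/
theorem pSetup_asymptotics
    (q : ℕ) (hq : 1 ≤ q)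
    (K P : ℕ → ℕ)
    (hqK : ∀ n, q ≤ K n) (hKP : ∀ n, K n ≤ P n) (hPpos : ∀ n, 0 < P n)
    (hKomega : Tendsto (fun n => (K n : ℝ)) atTop atTop)
    (hKsqrt : Tendsto (fun n => (K n : ℝ) / Real.sqrt ((P n : ℝ))) atTop (nhds 0)) :
    Tendsto
      (fun n => pSetup q (K n) (P n) /
        ((1 / (q.factorial : ℝ)) * ((K n : ℝ) ^ 2 / (P n : ℝ)) ^ q))
      atTop (nhds 1) :=
  pSetup_asymptotics_general q K P hPpos hKomega hKsqrt
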